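/- For the full domain S = {0,1}³, the randomness complexity satisfies ρ(S) = 3: three independent uniform bits suffice (share each secret xᵢ as (Rᵢ, xᵢ ⊕ Rᵢ) placed on the two shares held by the parties other than/including Pᵢ appropriately), and no 3SS scheme for S uses fewer than 3 bits of randomness. -/

import Mathlib

open scoped Classical

/-- A distribution scheme: a distribution `pR` on a finite randomness set `R`
and a map producing three shares from a secret and the randomness. -/
structure Scheme (X A B C R : Type) [Fintype R] where
  pR : R → ℝ
  nonneg : ∀ r, 0 ≤ pR r
  sum_one : ∑ r, pR r = 1
  share : X → R → A × B × C

/-- Party `P₁`'s view: `(W₁₂, W₃₁)`. -/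
def view1 {A B C : Type} (w : A × B × C) : A × C := (w.1, w.2.2)
/-- Party `P₂`'s view: `(W₂₃, W₁₂)`. -/
def view2 {A B C : Type} (w : A × B × C) : B × A := (w.2.1, w.1)
/-- Party `P₃`'s view: `(W₃₁, W₂₃)`. -/
def view3 {A B C : Type} (w : A × B × C) : C × B := (w.2.2, w.2.1)

/-- Probability that party `P₁`'s pair of shares equals `v`, given the secret `x`. -/
noncomputable def probV1 {X A B C R : Type} [Fintype R] (sch : Scheme X A B C R)
    (x : X) (v : A × C) : ℝ :=
  ∑ r, if view1 (sch.share x r) = v then sch.pR r else 0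

/-- Probability that party `P₂`'s pair of shares equals `v`, given the secret `x`. -/
noncomputable def probV2 {X A B C R : Type} [Fintype R] (sch : Scheme X A B C R)
    (x : X) (v : B × A) : ℝ :=
  ∑ r, if view2 (sch.share x r) = v then sch.pR r else 0

/-- Probability that party `P₃`'s pair of shares equals `v`, given the secret `x`. -/
noncomputable def probV3 {X A B C R : Type} [Fintype R] (sch : Scheme X A B C R)
    (x : X) (v : C × B) : ℝ :=
  ∑ r, if view3 (sch.share x r) = v then sch.pR r else 0

/-- A distribution scheme is a 3SS scheme for domain `S`:
perfect correctness (each party reconstructs its secret coordinate from its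
pair of shares) and perfect privacy (the distribution of party `Pᵢ`'s pair of
shares depends on the secret vector only through coordinate `i`). -/
def Is3SS {X1 X2 X3 A B C R : Type} [Fintype R] (S : Set (X1 × X2 × X3))
    (sch : Scheme (X1 × X2 × X3) A B C R) : Prop :=
  (∃ φ1 : A × C → X1, ∀ x ∈ S, ∀ r, 0 < sch.pR r → φ1 (view1 (sch.share x r)) = x.1) ∧
  (∃ φ2 : B × A → X2, ∀ x ∈ S, ∀ r, 0 < sch.pR r → φ2 (view2 (sch.share x r)) = x.2.1) ∧
  (∃ φ3 : C × B → X3, ∀ x ∈ S, ∀ r, 0 < sch.pR r → φ3 (view3 (sch.share x r)) = x.2.2) ∧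
  (∀ x ∈ S, ∀ x' ∈ S, x.1 = x'.1 → ∀ v, probV1 sch x v = probV1 sch x' v) ∧
  (∀ x ∈ S, ∀ x' ∈ S, x.2.1 = x'.2.1 → ∀ v, probV2 sch x v = probV2 sch x' v) ∧
  (∀ x ∈ S, ∀ x' ∈ S, x.2.2 = x'.2.2 → ∀ v, probV3 sch x v = probV3 sch x' v)

/-- The randomness complexity `ρ(S)`: the infimum of `log₂ |R|` over all
3SS schemes for domain `S`. -/
noncomputable def rho {X1 X2 X3 : Type} (S : Set (X1 × X2 × X3)) : ℝ :=
  sInf { t : ℝ | ∃ (n : ℕ) (A B C : Type) (sch : Scheme (X1 × X2 × X3) A B C (Fin n)),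
    Is3SS S sch ∧ t = Real.logb 2 n }

/-! Fix a secret `x₀` and an outcome `r₀` of weight `p`, and let `c`, `b` be the shares `W₃₁`,
`W₂₃` it produces. By `P₃`'s privacy the event `(W₃₁, W₂₃) = (c, b)` has probability at least `p`
at every secret `(x₁, y₂, x₀₃)`, where `P₂` decodes `y₂` from `(b, W₁₂)`; these are events in
`P₁`'s view, so `P₁`'s privacy gives `Pr_x[W₃₁ = c] ≥ |X₂| p` at every secret `x`. At a secret
`(y₁, x₀₂, y₃)` the share `W₃₁ = c` lets `P₁` and `P₃` decode `y₁` and `y₃` from `W₁₂` and `W₂₃`,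
so `P₂`'s privacy yields `|X₁| |X₃|` disjoint events at `x₀`, each of probability at least
`|X₂| p`. Hence every outcome has weight at most `1 / (|X₁| |X₂| |X₃|)`, so there are at least
`8` outcomes for `{0,1}³`, and the one-time pad `(Rᵢ, xᵢ ⊕ Rᵢ)` uses exactly `8`. -/

namespace Scheme

open Finset

variable {X A B C R : Type} [Fintype R]

noncomputable def prob (sch : Scheme X A B C R) (x : X) (E : A × B × C → Prop) : ℝ :=
  ∑ r, if E (sch.share x r) then sch.pR r else 0

theorem nonempty_randomness (sch : Scheme X A B C R) : Nonempty R := by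
  by_contra hR
  have := not_nonempty_iff.mp hR
  simpa using sch.sum_one

variable {sch : Scheme X A B C R}

theorem pR_le_prob {x : X} {r : R} {E : A × B × C → Prop} (hE : E (sch.share x r)) :
    sch.pR r ≤ sch.prob x E := by
  have hterm := single_le_sum (f := fun r => if E (sch.share x r) then sch.pR r else 0)
    (fun r _ => by split <;> simp [sch.nonneg r]) (mem_univ r)
  simpa [prob, hE] using hterm

theorem prob_mono {x : X} {E F : A × B × C → Prop}
    (h : ∀ r, 0 < sch.pR r → E (sch.share x r) → F (sch.share x r)) :
    sch.prob x E ≤ sch.prob x F := by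
  refine sum_le_sum fun r _ => ?_
  rcases (sch.nonneg r).eq_or_lt with h0 | hpos
  · simp [← h0]
  · by_cases hE : E (sch.share x r)
    · simp [hE, h r hpos hE]
    · simp only [hE, if_false]
      split <;> simp [sch.nonneg r]

theorem prob_eq_card_mul {c : ℝ} (hc : ∀ r, sch.pR r = c) (x : X) (E : A × B × C → Prop) :
    sch.prob x E = #{r | E (sch.share x r)} * c := by
  simp only [prob, hc]
  rw [← sum_filter, sum_const, nsmul_eq_mul]

theorem sum_prob_and_fiber {ι : Type} [Fintype ι] (x : X) (E : A × B × C → Prop)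
    (g : A × B × C → ι) :
    ∑ i, sch.prob x (fun w => E w ∧ g w = i) = sch.prob x E := by
  unfold prob
  rw [sum_comm]
  refine sum_congr rfl fun r _ => ?_
  by_cases hE : E (sch.share x r) <;> simp [hE]

theorem sum_prob_fiber {ι : Type} [Fintype ι] (x : X) (g : A × B × C → ι) :
    ∑ i, sch.prob x (fun w => g w = i) = 1 := by
  simpa [prob, sch.sum_one] using sum_prob_and_fiber (sch := sch) x (fun _ => True) g

-- `probV1` etc. decide `view w = v` through `DecidableEq` on products rather than through
-- `Classical.propDecidable`; `congr!` identifies the two instances.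
theorem sum_ite_eq_prob {T : Type} [DecidableEq T] (view : A × B × C → T) (x : X) (v : T) :
    (∑ r, if view (sch.share x r) = v then sch.pR r else 0) = sch.prob x (fun w => view w = v) := by
  unfold prob
  congr!

theorem probV1_eq_prob (x : X) (v : A × C) :
    probV1 sch x v = sch.prob x (fun w => view1 w = v) :=
  sum_ite_eq_prob view1 x v

theorem probV2_eq_prob (x : X) (v : B × A) :
    probV2 sch x v = sch.prob x (fun w => view2 w = v) :=
  sum_ite_eq_prob view2 x v

theorem probV3_eq_prob (x : X) (v : C × B) :
    probV3 sch x v = sch.prob x (fun w => view3 w = v) :=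
  sum_ite_eq_prob view3 x v

theorem prob_comp_eq_sum_fiber {T : Type} (view : A × B × C → T) (x : X) (Q : T → Prop)
    (V : Finset T) (hV : ∀ r, view (sch.share x r) ∈ V) :
    sch.prob x (fun w => Q (view w)) = ∑ v ∈ V with Q v, sch.prob x (fun w => view w = v) := by
  unfold prob
  rw [sum_comm]
  refine sum_congr rfl fun r _ => ?_
  rw [sum_ite_eq]
  simp [hV r]

theorem prob_comp_eq_of_fiber_eq {T : Type} (view : A × B × C → T) {x x' : X}
    (h : ∀ v, sch.prob x (fun w => view w = v) = sch.prob x' (fun w => view w = v))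
    (Q : T → Prop) :
    sch.prob x (fun w => Q (view w)) = sch.prob x' (fun w => Q (view w)) := by
  let V := univ.image (fun r => view (sch.share x r)) ∪
    univ.image (fun r => view (sch.share x' r))
  rw [prob_comp_eq_sum_fiber view x Q V (by simp [V]),
    prob_comp_eq_sum_fiber view x' Q V (by simp [V])]
  exact sum_congr rfl fun v _ => h v

end Scheme

namespace Is3SS

open Scheme Fintype

variable {X1 X2 X3 A B C R : Type} [Fintype R] {S : Set (X1 × X2 × X3)}
  {sch : Scheme (X1 × X2 × X3) A B C R}

theorem prob_view1_eq (h : Is3SS S sch) {x x' : X1 × X2 × X3} (hx : x ∈ S) (hx' : x' ∈ S)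
    (h1 : x.1 = x'.1) (Q : A × C → Prop) :
    sch.prob x (fun w => Q (view1 w)) = sch.prob x' (fun w => Q (view1 w)) :=
  prob_comp_eq_of_fiber_eq view1
    (by simpa only [probV1_eq_prob] using h.2.2.2.1 x hx x' hx' h1) Q

theorem prob_view2_eq (h : Is3SS S sch) {x x' : X1 × X2 × X3} (hx : x ∈ S) (hx' : x' ∈ S)
    (h2 : x.2.1 = x'.2.1) (Q : B × A → Prop) :
    sch.prob x (fun w => Q (view2 w)) = sch.prob x' (fun w => Q (view2 w)) :=
  prob_comp_eq_of_fiber_eq view2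
    (by simpa only [probV2_eq_prob] using h.2.2.2.2.1 x hx x' hx' h2) Q

theorem prob_view3_eq (h : Is3SS S sch) {x x' : X1 × X2 × X3} (hx : x ∈ S) (hx' : x' ∈ S)
    (h3 : x.2.2 = x'.2.2) (Q : C × B → Prop) :
    sch.prob x (fun w => Q (view3 w)) = sch.prob x' (fun w => Q (view3 w)) :=
  prob_comp_eq_of_fiber_eq view3
    (by simpa only [probV3_eq_prob] using h.2.2.2.2.2 x hx x' hx' h3) Q

variable [Fintype X2]

theorem card_mul_pR_le_prob_share₃₁ (h : Is3SS Set.univ sch) (x₀ x : X1 × X2 × X3) (r₀ : R) :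
    card X2 * sch.pR r₀ ≤ sch.prob x (fun w => w.2.2 = (sch.share x₀ r₀).2.2) := by
  obtain ⟨φ2, hφ2⟩ := h.2.1
  set w₀ := sch.share x₀ r₀
  have hfiber (y2 : X2) :
      sch.pR r₀ ≤ sch.prob x (fun w => w.2.2 = w₀.2.2 ∧ φ2 (w₀.2.1, w.1) = y2) := by
    let x' := (x.1, y2, x₀.2.2)
    calc sch.pR r₀ ≤ sch.prob x₀ (fun w => view3 w = view3 w₀) := pR_le_prob rfl
      _ = sch.prob x' (fun w => view3 w = view3 w₀) :=
        prob_view3_eq (x := x₀) (x' := x') h trivial trivial rfl (· = view3 w₀)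
      _ ≤ sch.prob x' (fun w => w.2.2 = w₀.2.2 ∧ φ2 (w₀.2.1, w.1) = y2) :=
        prob_mono fun r hr hw => by
          simp only [view3, Prod.mk.injEq] at hw
          refine ⟨hw.1, ?_⟩
          rw [← hw.2]
          exact hφ2 x' trivial r hr
      _ = sch.prob x (fun w => w.2.2 = w₀.2.2 ∧ φ2 (w₀.2.1, w.1) = y2) :=
        prob_view1_eq (x := x') (x' := x) h trivial trivial rfl
          (fun v => v.2 = w₀.2.2 ∧ φ2 (w₀.2.1, v.1) = y2)
  calc card X2 * sch.pR r₀ = ∑ _y2 : X2, sch.pR r₀ := by simp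
    _ ≤ ∑ y2, sch.prob x (fun w => w.2.2 = w₀.2.2 ∧ φ2 (w₀.2.1, w.1) = y2) :=
      Finset.sum_le_sum fun y2 _ => hfiber y2
    _ = sch.prob x (fun w => w.2.2 = w₀.2.2) := sum_prob_and_fiber x _ _

theorem card_mul_pR_le_prob_decode (h : Is3SS Set.univ sch) {φ1 : A × C → X1} {φ3 : C × B → X3}
    (hφ1 : ∀ x r, 0 < sch.pR r → φ1 (view1 (sch.share x r)) = x.1)
    (hφ3 : ∀ x r, 0 < sch.pR r → φ3 (view3 (sch.share x r)) = x.2.2)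
    (x₀ : X1 × X2 × X3) (r₀ : R) (y : X1 × X3) :
    card X2 * sch.pR r₀ ≤ sch.prob x₀ (fun w =>
      (φ1 (w.1, (sch.share x₀ r₀).2.2), φ3 ((sch.share x₀ r₀).2.2, w.2.1)) = y) := by
  set c := (sch.share x₀ r₀).2.2
  let x := (y.1, x₀.2.1, y.2)
  calc card X2 * sch.pR r₀ ≤ sch.prob x (fun w => w.2.2 = c) :=
        card_mul_pR_le_prob_share₃₁ h x₀ x r₀
    _ ≤ sch.prob x (fun w => (φ1 (w.1, c), φ3 (c, w.2.1)) = y) :=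
        prob_mono fun r hr hc => by
          rw [← hc]
          exact Prod.ext (hφ1 x r hr) (hφ3 x r hr)
    _ = sch.prob x₀ (fun w => (φ1 (w.1, c), φ3 (c, w.2.1)) = y) :=
        prob_view2_eq (x := x) (x' := x₀) h trivial trivial rfl
          (fun v => (φ1 (v.2, c), φ3 (c, v.1)) = y)

variable [Fintype X1] [Fintype X3]

theorem card_mul_pR_le_one (h : Is3SS Set.univ sch) (x₀ : X1 × X2 × X3) (r₀ : R) :
    (card X1 * card X2 * card X3 : ℝ) * sch.pR r₀ ≤ 1 := by
  obtain ⟨φ1, hφ1⟩ := h.1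
  obtain ⟨φ3, hφ3⟩ := h.2.2.1
  set c := (sch.share x₀ r₀).2.2
  calc (card X1 * card X2 * card X3 : ℝ) * sch.pR r₀ = ∑ _y : X1 × X3, card X2 * sch.pR r₀ := by
        simp only [Finset.sum_const, Finset.card_univ, card_prod, nsmul_eq_mul, Nat.cast_mul]
        ring
    _ ≤ ∑ y, sch.prob x₀ (fun w => (φ1 (w.1, c), φ3 (c, w.2.1)) = y) :=
        Finset.sum_le_sum fun y _ => card_mul_pR_le_prob_decode h
          (fun x r => hφ1 x trivial r) (fun x r => hφ3 x trivial r) x₀ r₀ y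
    _ = 1 := sum_prob_fiber x₀ _

theorem card_mul_card_mul_card_le (h : Is3SS Set.univ sch) :
    card X1 * card X2 * card X3 ≤ card R := by
  rcases isEmpty_or_nonempty (X1 × X2 × X3) with hX | ⟨⟨x₀⟩⟩
  · have hcard : card (X1 × X2 × X3) = 0 := card_eq_zero
    rw [card_prod, card_prod, ← mul_assoc] at hcard
    simp [hcard]
  suffices (card X1 * card X2 * card X3 : ℝ) ≤ card R by exact_mod_cast this
  calc (card X1 * card X2 * card X3 : ℝ)
      = ∑ r, (card X1 * card X2 * card X3 : ℝ) * sch.pR r := by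
        rw [← Finset.mul_sum, sch.sum_one, mul_one]
    _ ≤ ∑ _r : R, 1 := Finset.sum_le_sum fun r _ => card_mul_pR_le_one h x₀ r
    _ = card R := by simp

end Is3SS

theorem rho_eq_logb_of_isLeast {X1 X2 X3 : Type} {S : Set (X1 × X2 × X3)} {m : ℕ}
    (hm : IsLeast {n | ∃ (A B C : Type) (sch : Scheme (X1 × X2 × X3) A B C (Fin n)),
      Is3SS S sch} m) :
    rho S = Real.logb 2 m := by
  obtain ⟨⟨A, B, C, sch, hsch⟩, hmin⟩ := hm
  have hm_pos : 0 < m := Fin.pos_iff_nonempty.mpr sch.nonempty_randomness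
  have hlower : ∀ t ∈ {t : ℝ | ∃ (n : ℕ) (A B C : Type)
      (sch : Scheme (X1 × X2 × X3) A B C (Fin n)), Is3SS S sch ∧ t = Real.logb 2 n},
      Real.logb 2 m ≤ t := by
    rintro t ⟨n, A, B, C, sch, hsch, rfl⟩
    exact Real.logb_le_logb_of_le one_lt_two (by exact_mod_cast hm_pos)
      (by exact_mod_cast hmin ⟨A, B, C, sch, hsch⟩)
  exact le_antisymm (csInf_le ⟨_, hlower⟩ ⟨m, A, B, C, sch, hsch, rfl⟩)
    (le_csInf ⟨_, m, A, B, C, sch, hsch, rfl⟩ hlower)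

section OneTimePad

open Finset

-- `r : Fin 8` encodes the three pad bits `R₁, R₂, R₃` as its binary digits.
def oneTimePadShare (x : Bool × Bool × Bool) (r : Fin 8) :
    (Bool × Bool) × (Bool × Bool) × (Bool × Bool) :=
  let R i := r.val.testBit i
  ((R 0, xor x.2.1 (R 1)), (R 1, xor x.2.2 (R 2)), (R 2, xor x.1 (R 0)))

noncomputable def oneTimePad :
    Scheme (Bool × Bool × Bool) (Bool × Bool) (Bool × Bool) (Bool × Bool) (Fin 8) where
  pR _ := 1 / 8
  nonneg _ := by norm_num
  sum_one := by simp
  share := oneTimePadShare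

theorem oneTimePad_prob_eq {T : Type} [DecidableEq T]
    (view : (Bool × Bool) × (Bool × Bool) × (Bool × Bool) → T) {x x' : Bool × Bool × Bool}
    (hcard : ∀ v, #{r | view (oneTimePadShare x r) = v} = #{r | view (oneTimePadShare x' r) = v})
    (v : T) :
    oneTimePad.prob x (fun w => view w = v) = oneTimePad.prob x' (fun w => view w = v) := by
  rw [Scheme.prob_eq_card_mul (fun _ => rfl), Scheme.prob_eq_card_mul (fun _ => rfl)]
  congr 2
  convert hcard v using 3 <;> rfl

theorem oneTimePad_is3SS : Is3SS Set.univ oneTimePad := by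
  refine ⟨⟨fun v => xor v.1.1 v.2.2, ?_⟩, ⟨fun v => xor v.1.1 v.2.2, ?_⟩,
    ⟨fun v => xor v.1.1 v.2.2, ?_⟩, ?_, ?_, ?_⟩
  · intro x _ r _
    simp only [view1, oneTimePad, oneTimePadShare]
    rw [Bool.xor_left_comm, Bool.xor_self, Bool.xor_false]
  · intro x _ r _
    simp only [view2, oneTimePad, oneTimePadShare]
    rw [Bool.xor_left_comm, Bool.xor_self, Bool.xor_false]
  · intro x _ r _
    simp only [view3, oneTimePad, oneTimePadShare]
    rw [Bool.xor_left_comm, Bool.xor_self, Bool.xor_false]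
  · intro x _ x' _ hx
    have hcard : ∀ x x' : Bool × Bool × Bool, x.1 = x'.1 → ∀ v,
        #{r | view1 (oneTimePadShare x r) = v} = #{r | view1 (oneTimePadShare x' r) = v} := by
      decide
    simpa only [Scheme.probV1_eq_prob] using oneTimePad_prob_eq view1 (hcard x x' hx)
  · intro x _ x' _ hx
    have hcard : ∀ x x' : Bool × Bool × Bool, x.2.1 = x'.2.1 → ∀ v,
        #{r | view2 (oneTimePadShare x r) = v} = #{r | view2 (oneTimePadShare x' r) = v} := by
      decide
    simpa only [Scheme.probV2_eq_prob] using oneTimePad_prob_eq view2 (hcard x x' hx)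
  · intro x _ x' _ hx
    have hcard : ∀ x x' : Bool × Bool × Bool, x.2.2 = x'.2.2 → ∀ v,
        #{r | view3 (oneTimePadShare x r) = v} = #{r | view3 (oneTimePadShare x' r) = v} := by
      decide
    simpa only [Scheme.probV3_eq_prob] using oneTimePad_prob_eq view3 (hcard x x' hx)

end OneTimePad

/-- For the full domain `S = {0,1}³`, the randomness complexity is exactly 3
bits: three independent uniform bits suffice, and no 3SS scheme for `S` uses
fewer than 3 bits of randomness. -/
theorem rho_full_cube : rho (Set.univ : Set (Bool × Bool × Bool)) = 3 := by
  have hlog : Real.logb 2 ((8 : ℕ) : ℝ) = 3 := by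
    rw [show ((8 : ℕ) : ℝ) = 2 ^ (3 : ℕ) by norm_num, Real.logb_pow,
      Real.logb_self_eq_one one_lt_two]
    norm_num
  rw [← hlog]
  refine rho_eq_logb_of_isLeast ⟨⟨_, _, _, oneTimePad, oneTimePad_is3SS⟩, ?_⟩
  rintro n ⟨A, B, C, sch, hsch⟩
  simpa using hsch.card_mul_card_mul_card_le
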